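/- Let 0 < a ≤ b < 2, let α : ℝ → [a,b] be continuous, and let h₀ satisfy 1/a − 1/b < h₀ < 1 + 1/b − 1/a, with h₀ ≠ 1/α(x) for all x ∈ ℝ. Then for every u ∈ ℝ and every t ∈ ℝ, lim_{r→0⁺} ∫_ℝ | (t−z)_+^{h₀ − 1/α(u+rz)} − (−z)_+^{h₀ − 1/α(u+rz)} − (t−z)_+^{h₀ − 1/α(u)} + (−z)_+^{h₀ − 1/α(u)} |^{a,b} dz = 0, where s_+^γ = s^γ if s > 0 and s_+^γ = 0 if s ≤ 0. Consequently linear fractional multistable motion Y(t) = ∫ ((t−x)_+^{h₀−1/α(x)} − (−x)_+^{h₀−1/α(x)}) dM_α(x) satisfies the localisability condition of the main theorem at every u, with index h₀ and local form kernel k(t,z) = (t−z)_+^{h₀−1/α(u)} − (−z)_+^{h₀−1/α(u)}, so Y is h₀-localisable at u with local form the linear fractional α(u)-stable motion L_{α(u),h₀,1,0}. -/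

import Mathlib

/-!
Dominated convergence in `r`. All exponents `h₀ - 1/α(x)` lie in `[m, M] = [h₀ - 1/a, h₀ - 1/b]`.
For `z ∉ {0, t}` the integrand tends to `0` by continuity of `α`. For the domination, on a
bounded range of `z` the kernel is bounded by the powers `|t - z|^p`, `|z|^p` with `p ∈ {m, M}`,
and `p a, p b > -1` makes their `|·|^{a,b}` locally integrable; as `z → -∞` the mean value
theorem gives `|(t - z)^e - (-z)^e| ≲ (-z)^(M - 1)`, whose `|·|^{a,b}` is integrable because
`(M - 1) a < -1`; for `z > max t 0` the kernel vanishes.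
-/

open MeasureTheory Filter Set Topology ProbabilityTheory BoundedContinuousFunction

noncomputable section

/-- Membership in `F_α`: `f` is measurable and either a.e. zero or there is a (unique)
`λ > 0` with `∫ |f(x)/λ|^{α(x)} dx = 1`. -/
def MemFalpha (α f : ℝ → ℝ) : Prop :=
  Measurable f ∧ (f =ᵐ[volume] (0 : ℝ → ℝ) ∨ ∃ lam > (0:ℝ), ∫ x : ℝ, |f x / lam| ^ α x = 1)

/-- The quasinorm `‖f‖_α`, the unique `λ > 0` with `∫ |f(x)/λ|^{α(x)} dx = 1`
(and `0` if no such `λ` exists, e.g. if `f = 0` a.e.). -/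
def alphaNorm (α f : ℝ → ℝ) : ℝ :=
  sInf {lam : ℝ | 0 < lam ∧ ∫ x : ℝ, |f x / lam| ^ α x = 1}

/-- `|s|^{a,b} = max{|s|^a, |s|^b}`. -/
def pab (a b s : ℝ) : ℝ := max (|s| ^ a) (|s| ^ b)

/-- Membership in `F_{a,b}`: measurable with `∫ |f(x)|^{a,b} dx < ∞`. -/
def MemFab (a b : ℝ) (f : ℝ → ℝ) : Prop :=
  Measurable f ∧ Integrable (fun x : ℝ => pab a b (f x))

/-- The norm `‖f‖_p = (∫ |f(x)|^p dx)^{1/p}`. -/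
def pNorm (p : ℝ) (f : ℝ → ℝ) : ℝ := (∫ x : ℝ, |f x| ^ p) ^ (1 / p)

/-- Membership in `E₀`: Lebesgue measurable with finite Lebesgue measure. -/
def MemE0 (A : Set ℝ) : Prop := MeasurableSet A ∧ volume A < ⊤

/-- `s_+^γ`: equals `s^γ` if `s > 0` and `0` if `s ≤ 0`. -/
def posPow (s γ : ℝ) : ℝ := if 0 < s then s ^ γ else 0

section Pab

variable {a b : ℝ}

lemma pab_nonneg (a b s : ℝ) : 0 ≤ pab a b s :=
  (Real.rpow_nonneg (abs_nonneg s) a).trans (le_max_left _ _)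

lemma pab_zero (ha : a ≠ 0) (hb : b ≠ 0) : pab a b 0 = 0 := by
  simp [pab, Real.zero_rpow ha, Real.zero_rpow hb]

@[simp]
lemma pab_abs (s : ℝ) : pab a b |s| = pab a b s := by
  simp only [pab, abs_abs]

lemma continuous_pab (ha : 0 ≤ a) (hb : 0 ≤ b) : Continuous (pab a b) :=
  (continuous_abs.rpow_const fun _ => Or.inr ha).max
    (continuous_abs.rpow_const fun _ => Or.inr hb)

lemma pab_le_pab_of_abs_le (ha : 0 ≤ a) (hab : a ≤ b) {x y : ℝ} (h : |x| ≤ y) :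
    pab a b x ≤ pab a b y :=
  have h' : |x| ≤ |y| := h.trans (le_abs_self y)
  max_le_max (Real.rpow_le_rpow (abs_nonneg x) h' ha)
    (Real.rpow_le_rpow (abs_nonneg x) h' (ha.trans hab))

lemma pab_max_le (x y : ℝ) : pab a b (max x y) ≤ pab a b x + pab a b y := by
  rcases le_total x y with h | h
  · rw [max_eq_right h]; exact le_add_of_nonneg_left (pab_nonneg a b x)
  · rw [max_eq_left h]; exact le_add_of_nonneg_right (pab_nonneg a b y)

lemma pab_mul_le_of_one_le (hab : a ≤ b) {c : ℝ} (hc : 1 ≤ c) (x : ℝ) :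
    pab a b (c * x) ≤ c ^ b * pab a b x := by
  have hc0 : 0 ≤ c := zero_le_one.trans hc
  have key : ∀ p ≤ b, |x| ^ p ≤ pab a b x → |c * x| ^ p ≤ c ^ b * pab a b x := by
    intro p hp hx
    rw [abs_mul, abs_of_nonneg hc0, Real.mul_rpow hc0 (abs_nonneg x)]
    exact mul_le_mul (Real.rpow_le_rpow_of_exponent_le hc hp) hx
      (Real.rpow_nonneg (abs_nonneg x) p) (Real.rpow_nonneg hc0 b)
  exact max_le (key a hab (le_max_left _ _)) (key b le_rfl (le_max_right _ _))

lemma pab_sub_le (ha : 0 ≤ a) (hab : a ≤ b) (x y : ℝ) :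
    pab a b (x - y) ≤ 2 ^ b * (pab a b x + pab a b y) := by
  have hxy : |x - y| ≤ 2 * max |x| |y| := by
    linarith [abs_sub x y, le_max_left |x| |y|, le_max_right |x| |y|]
  calc pab a b (x - y) ≤ pab a b (2 * max |x| |y|) := pab_le_pab_of_abs_le ha hab hxy
    _ ≤ 2 ^ b * pab a b (max |x| |y|) := pab_mul_le_of_one_le hab one_le_two _
    _ ≤ 2 ^ b * (pab a b x + pab a b y) := by
      gcongr
      simpa using pab_max_le (a := a) (b := b) |x| |y|

end Pab

section PosPow

variable {m M e : ℝ}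

lemma abs_posPow_le (hm : m ≤ e) (hM : e ≤ M) (s : ℝ) :
    |posPow s e| ≤ max (|s| ^ m) (|s| ^ M) := by
  unfold posPow
  split_ifs with hs
  · rw [abs_of_nonneg (Real.rpow_nonneg hs.le e), abs_of_pos hs]
    rcases le_total s 1 with h1 | h1
    · exact le_max_of_le_left (Real.rpow_le_rpow_of_exponent_ge hs h1 hm)
    · exact le_max_of_le_right (Real.rpow_le_rpow_of_exponent_le h1 hM)
  · rw [abs_zero]
    exact (Real.rpow_nonneg (abs_nonneg s) m).trans (le_max_left _ _)

lemma pab_posPow_le {a b : ℝ} (ha : 0 ≤ a) (hab : a ≤ b) (hm : m ≤ e) (hM : e ≤ M) (s : ℝ) :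
    pab a b (posPow s e) ≤ pab a b (|s| ^ m) + pab a b (|s| ^ M) :=
  (pab_le_pab_of_abs_le ha hab (abs_posPow_le hm hM s)).trans (pab_max_le _ _)

lemma continuous_posPow {s : ℝ} (hs : s ≠ 0) : Continuous (posPow s) := by
  unfold posPow
  rcases hs.lt_or_gt with hs | hs
  · simp only [if_neg hs.not_gt]
    exact continuous_const
  · simp only [if_pos hs]
    exact Real.continuous_const_rpow hs.ne'

lemma Measurable.posPow {f g : ℝ → ℝ} (hf : Measurable f) (hg : Measurable g) :
    Measurable fun x => posPow (f x) (g x) :=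
  Measurable.ite (measurableSet_lt measurable_const hf) (hf.pow hg) measurable_const

end PosPow

lemma abs_rpow_sub_rpow_le {h s s' : ℝ} (hh : h ≤ 1) (hs : 0 < s) (hss : s ≤ s') :
    |s' ^ h - s ^ h| ≤ |h| * s ^ (h - 1) * (s' - s) := by
  have hderiv : ∀ x ∈ Icc s s',
      HasDerivWithinAt (fun y : ℝ => y ^ h) (h * x ^ (h - 1)) (Icc s s') x := fun x hx =>
    (Real.hasDerivAt_rpow_const (Or.inl (hs.trans_le hx.1).ne')).hasDerivWithinAt
  have hbound : ∀ x ∈ Icc s s', ‖h * x ^ (h - 1)‖ ≤ |h| * s ^ (h - 1) := by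
    intro x hx
    rw [norm_mul, Real.norm_eq_abs, Real.norm_eq_abs,
      abs_of_nonneg (Real.rpow_nonneg (hs.trans_le hx.1).le _)]
    exact mul_le_mul_of_nonneg_left
      (Real.rpow_le_rpow_of_nonpos hs hx.1 (by linarith)) (abs_nonneg h)
  have := (convex_Icc s s').norm_image_sub_le_of_norm_hasDerivWithin_le hderiv hbound
    ⟨le_rfl, hss⟩ ⟨hss, le_rfl⟩
  rwa [Real.norm_eq_abs, Real.norm_eq_abs, abs_of_nonneg (sub_nonneg.2 hss)] at this

lemma abs_rpow_add_sub_rpow_le {e s t : ℝ} (he : e ≤ 1) (hs : 0 < s) (ht : 2 * |t| ≤ s) :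
    |(s + t) ^ e - s ^ e| ≤ |e| * (s / 2) ^ (e - 1) * |t| := by
  have hst : s / 2 ≤ s + t := by linarith [neg_abs_le t]
  have hmono : ∀ x, s / 2 ≤ x → x ^ (e - 1) ≤ (s / 2) ^ (e - 1) := fun x hx =>
    Real.rpow_le_rpow_of_nonpos (half_pos hs) hx (by linarith)
  rcases le_total 0 t with h0 | h0
  · calc |(s + t) ^ e - s ^ e| ≤ |e| * s ^ (e - 1) * (s + t - s) :=
          abs_rpow_sub_rpow_le he hs (by linarith)
      _ ≤ |e| * (s / 2) ^ (e - 1) * |t| := by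
          rw [add_sub_cancel_left, abs_of_nonneg h0]
          exact mul_le_mul_of_nonneg_right
            (mul_le_mul_of_nonneg_left (hmono s (by linarith)) (abs_nonneg e)) h0
  · calc |(s + t) ^ e - s ^ e| = |s ^ e - (s + t) ^ e| := abs_sub_comm _ _
      _ ≤ |e| * (s + t) ^ (e - 1) * (s - (s + t)) :=
          abs_rpow_sub_rpow_le he (by linarith) (by linarith)
      _ ≤ |e| * (s / 2) ^ (e - 1) * |t| := by
          rw [sub_add_cancel_left, abs_of_nonpos h0]
          exact mul_le_mul_of_nonneg_right
            (mul_le_mul_of_nonneg_left (hmono _ hst) (abs_nonneg e)) (neg_nonneg.2 h0)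

section Integrability

variable {a b : ℝ}

lemma MeasureTheory.Integrable.pab {X : Type*} [MeasurableSpace X] {μ : Measure X} {f : X → ℝ}
    (ha : Integrable (fun x => |f x| ^ a) μ) (hb : Integrable (fun x => |f x| ^ b) μ) :
    Integrable (fun x => pab a b (f x)) μ :=
  ha.sup hb

lemma locallyIntegrable_abs_rpow {q : ℝ} (hq : -1 < q) :
    LocallyIntegrable (fun x : ℝ => |x| ^ q) :=
  locallyIntegrable_of_norm_le_rpow (C := 1) (α := -q) (by simp) (by simp; linarith)
    (ae_of_all _ fun x => by simp [abs_of_nonneg (Real.rpow_nonneg (abs_nonneg x) q)])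
    (continuous_abs.measurable.pow_const q).aestronglyMeasurable

lemma intervalIntegrable_abs_sub_rpow {q : ℝ} (hq : -1 < q) (c A B : ℝ) :
    IntervalIntegrable (fun z => |c - z| ^ q) volume A B := by
  have h := ((locallyIntegrable_abs_rpow hq).integrableOn_isCompact
    (isCompact_uIcc (a := c - A) (b := c - B))).intervalIntegrable
  simpa using h.comp_sub_left c

lemma integrableOn_pab_abs_sub_rpow {p : ℝ} (hpa : -1 < p * a) (hpb : -1 < p * b)
    (c : ℝ) {A B : ℝ} (hAB : A ≤ B) :
    IntegrableOn (fun z => pab a b (|c - z| ^ p)) (Icc A B) := by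
  have key : ∀ q, -1 < p * q → IntegrableOn (fun z => |(|c - z| ^ p)| ^ q) (Icc A B) := by
    intro q hq
    simp_rw [abs_of_nonneg (Real.rpow_nonneg (abs_nonneg _) p), ← Real.rpow_mul (abs_nonneg _)]
    exact (intervalIntegrable_iff_integrableOn_Icc_of_le hAB).1
      (intervalIntegrable_abs_sub_rpow hq c A B)
  exact (key a hpa).pab (key b hpb)

lemma integrableOn_Iio_neg_rpow {q R : ℝ} (hq : q < -1) (hR : 0 < R) :
    IntegrableOn (fun z => (-z) ^ q) (Iio (-R)) :=
  IntegrableOn.comp_neg_Iio (c := -R) (f := fun x => x ^ q)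
    (by rw [neg_neg]; exact integrableOn_Ioi_rpow_of_lt hq hR)

lemma integrableOn_pab_mul_neg_rpow {p C R : ℝ} (hC : 0 ≤ C) (hR : 0 < R)
    (hpa : p * a < -1) (hpb : p * b < -1) :
    IntegrableOn (fun z => pab a b (C * (-z) ^ p)) (Iio (-R)) := by
  have key : ∀ q, p * q < -1 → IntegrableOn (fun z => |C * (-z) ^ p| ^ q) (Iio (-R)) := by
    intro q hq
    refine IntegrableOn.congr_fun ((integrableOn_Iio_neg_rpow hq hR).const_mul (C ^ q))
      (fun z hz => ?_) measurableSet_Iio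
    have hz : 0 ≤ -z := by linarith [mem_Iio.1 hz]
    rw [abs_of_nonneg (mul_nonneg hC (Real.rpow_nonneg hz p)),
      Real.mul_rpow hC (Real.rpow_nonneg hz p), ← Real.rpow_mul hz]
  exact (key a hpa).pab (key b hpb)

end Integrability

/-- The kernel of linear fractional stable motion with exponent `e`. -/
def lfsmKernel (t e z : ℝ) : ℝ := posPow (t - z) e - posPow (-z) e

section Kernel

variable {a b m M e t z : ℝ}

lemma lfsmKernel_eq_zero_of_lt (ht : t < z) (h0 : 0 < z) : lfsmKernel t e z = 0 := by
  simp only [lfsmKernel, posPow, if_neg (sub_neg.2 ht).not_gt, if_neg (neg_neg_of_pos h0).not_gt,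
    sub_zero]

lemma lfsmKernel_sub_lfsmKernel (t e e' z : ℝ) :
    lfsmKernel t e z - lfsmKernel t e' z =
      posPow (t - z) e - posPow (-z) e - posPow (t - z) e' + posPow (-z) e' := by
  unfold lfsmKernel
  ring

lemma continuous_lfsmKernel (hz : z ≠ 0) (hzt : z ≠ t) : Continuous fun e => lfsmKernel t e z :=
  (continuous_posPow (sub_ne_zero.2 hzt.symm)).sub (continuous_posPow (neg_ne_zero.2 hz))

lemma measurable_lfsmKernel {f : ℝ → ℝ} (hf : Measurable f) :
    Measurable fun z => lfsmKernel t (f z) z :=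
  ((measurable_const.sub measurable_id).posPow hf).sub (measurable_neg.posPow hf)

lemma abs_lfsmKernel_le_of_lt (hM : M ≤ 1) (he : e ∈ Icc m M) (hz : z < -(2 * |t| + 2)) :
    |lfsmKernel t e z| ≤ max |m| |M| * |t| * 2 ^ (1 - M) * (-z) ^ (M - 1) := by
  have hs : 2 * |t| + 2 < -z := by linarith
  have hs0 : 0 < -z := by linarith [abs_nonneg t]
  have hkernel : lfsmKernel t e z = (-z + t) ^ e - (-z) ^ e := by
    have htz : 0 < t - z := by linarith [neg_abs_le t]
    rw [lfsmKernel, posPow, posPow, if_pos htz, if_pos hs0, neg_add_eq_sub]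
  have hhalf : (-z / 2) ^ (e - 1) ≤ 2 ^ (1 - M) * (-z) ^ (M - 1) :=
    calc (-z / 2) ^ (e - 1) ≤ (-z / 2) ^ (M - 1) :=
          Real.rpow_le_rpow_of_exponent_le (by linarith [abs_nonneg t]) (by linarith [he.2])
      _ = 2 ^ (1 - M) * (-z) ^ (M - 1) := by
          rw [Real.div_rpow hs0.le zero_le_two, div_eq_mul_inv, ← Real.rpow_neg zero_le_two,
            neg_sub, mul_comm]
  calc |lfsmKernel t e z| ≤ |e| * (-z / 2) ^ (e - 1) * |t| :=
        hkernel ▸ abs_rpow_add_sub_rpow_le (he.2.trans hM) hs0 (by linarith)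
    _ ≤ max |m| |M| * (2 ^ (1 - M) * (-z) ^ (M - 1)) * |t| := by
        gcongr
        exact abs_le_max_abs_abs he.1 he.2
    _ = max |m| |M| * |t| * 2 ^ (1 - M) * (-z) ^ (M - 1) := by ring

lemma pab_lfsmKernel_le (ha : 0 ≤ a) (hab : a ≤ b) (he : e ∈ Icc m M) (t z : ℝ) :
    pab a b (lfsmKernel t e z) ≤
      2 ^ b * (pab a b (|t - z| ^ m) + pab a b (|t - z| ^ M) +
        (pab a b (|z| ^ m) + pab a b (|z| ^ M))) := by
  refine (pab_sub_le ha hab _ _).trans ?_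
  gcongr
  · exact pab_posPow_le ha hab he.1 he.2 _
  · simpa using pab_posPow_le ha hab he.1 he.2 (-z)

end Kernel

/-- The kernel vanishes for `z > R ≥ max t 0`, so the bound has no term there. -/
def lfsmKernelBound (a b m M t R z : ℝ) : ℝ :=
  (Iio (-R)).indicator (fun z => pab a b (max |m| |M| * |t| * 2 ^ (1 - M) * (-z) ^ (M - 1))) z +
    (Icc (-R) R).indicator (fun z => 2 ^ b *
      (pab a b (|t - z| ^ m) + pab a b (|t - z| ^ M) + (pab a b (|z| ^ m) + pab a b (|z| ^ M)))) z

section Bound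

variable {a b m M e t R : ℝ}

lemma lfsmKernelBound_nonneg (a b m M t R z : ℝ) : 0 ≤ lfsmKernelBound a b m M t R z :=
  add_nonneg (indicator_nonneg (fun _ _ => pab_nonneg _ _ _) _)
    (indicator_nonneg (fun _ _ => mul_nonneg (Real.rpow_nonneg zero_le_two b) <|
      add_nonneg (add_nonneg (pab_nonneg _ _ _) (pab_nonneg _ _ _))
        (add_nonneg (pab_nonneg _ _ _) (pab_nonneg _ _ _))) _)

lemma pab_lfsmKernel_le_lfsmKernelBound (ha : 0 < a) (hab : a ≤ b) (hM : M ≤ 1)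
    (he : e ∈ Icc m M) (hR : 2 * |t| + 2 ≤ R) (z : ℝ) :
    pab a b (lfsmKernel t e z) ≤ lfsmKernelBound a b m M t R z := by
  rcases lt_or_ge z (-R) with hz | hz
  · rw [lfsmKernelBound, indicator_of_mem (show z ∈ Iio (-R) from hz),
      indicator_of_notMem fun h : z ∈ Icc (-R) R => h.1.not_gt hz,
      add_zero]
    exact pab_le_pab_of_abs_le ha.le hab (abs_lfsmKernel_le_of_lt hM he (by linarith))
  rcases le_or_gt z R with hz' | hz'
  · rw [lfsmKernelBound, indicator_of_notMem (show z ∉ Iio (-R) from not_lt.2 hz),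
      indicator_of_mem (show z ∈ Icc (-R) R from ⟨hz, hz'⟩), zero_add]
    exact pab_lfsmKernel_le ha.le hab he t z
  · rw [lfsmKernel_eq_zero_of_lt (by linarith [le_abs_self t]) (by linarith [abs_nonneg t]),
      pab_zero ha.ne' (ha.trans_le hab).ne']
    exact lfsmKernelBound_nonneg a b m M t R z

lemma integrable_lfsmKernelBound (ha : 0 < a) (hab : a ≤ b) (hma : -1 < m * a)
    (hmb : -1 < m * b) (hmM : m ≤ M) (hM : (M - 1) * a < -1) (hR : 0 < R) :
    Integrable (lfsmKernelBound a b m M t R) := by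
  have hMb : (M - 1) * b < -1 := by nlinarith
  have hMa' : -1 < M * a := by nlinarith
  have hMb' : -1 < M * b := by nlinarith
  have hlocal (c : ℝ) :
      IntegrableOn (fun z => pab a b (|c - z| ^ m) + pab a b (|c - z| ^ M)) (Icc (-R) R) :=
    (integrableOn_pab_abs_sub_rpow hma hmb c (by linarith)).add
      (integrableOn_pab_abs_sub_rpow hMa' hMb' c (by linarith))
  refine Integrable.add ?_ ?_
  · exact (integrableOn_pab_mul_neg_rpow (by positivity) hR hM hMb).integrable_indicator
      measurableSet_Iio
  · refine IntegrableOn.integrable_indicator ?_ measurableSet_Icc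
    exact ((hlocal t).add (by simpa using hlocal 0)).const_mul _

end Bound

theorem tendsto_integral_pab_lfsmKernel_sub {ι : Type*} {l : Filter ι} [l.IsCountablyGenerated]
    {a b m M t e₀ : ℝ} {e : ι → ℝ → ℝ} (ha : 0 < a) (hab : a ≤ b)
    (hma : -1 < m * a) (hmb : -1 < m * b) (hM : (M - 1) * a < -1)
    (he_meas : ∀ i, Measurable (e i)) (he : ∀ i z, e i z ∈ Icc m M) (he₀ : e₀ ∈ Icc m M)
    (he_lim : ∀ z, Tendsto (fun i => e i z) l (𝓝 e₀)) :
    Tendsto (fun i => ∫ z, pab a b (lfsmKernel t (e i z) z - lfsmKernel t e₀ z)) l (𝓝 0) := by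
  have hb : 0 < b := ha.trans_le hab
  have hM1 : M ≤ 1 := by nlinarith
  have hR : (0 : ℝ) < 2 * |t| + 2 := by positivity
  set G := lfsmKernelBound a b m M t (2 * |t| + 2)
  have hG : Integrable G := integrable_lfsmKernelBound ha hab hma hmb (he₀.1.trans he₀.2) hM hR
  have hbound (i : ι) (z : ℝ) :
      ‖pab a b (lfsmKernel t (e i z) z - lfsmKernel t e₀ z)‖ ≤ 2 ^ b * (G z + G z) := by
    rw [Real.norm_eq_abs, abs_of_nonneg (pab_nonneg _ _ _)]
    exact (pab_sub_le ha.le hab _ _).trans <| mul_le_mul_of_nonneg_left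
      (add_le_add (pab_lfsmKernel_le_lfsmKernelBound ha hab hM1 (he i z) le_rfl z)
        (pab_lfsmKernel_le_lfsmKernelBound ha hab hM1 he₀ le_rfl z))
      (Real.rpow_nonneg zero_le_two b)
  have hlim : ∀ᵐ z, Tendsto (fun i => pab a b (lfsmKernel t (e i z) z - lfsmKernel t e₀ z)) l
      (𝓝 0) := by
    have h_ae : ∀ᵐ z : ℝ, z ∉ ({0, t} : Set ℝ) :=
      measure_eq_zero_iff_ae_notMem.1 ((toFinite _).measure_zero _)
    filter_upwards [h_ae] with z hz
    have hdiff : Tendsto (fun i => lfsmKernel t (e i z) z - lfsmKernel t e₀ z) l (𝓝 0) := by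
      simpa using (((continuous_lfsmKernel (fun h => hz (.inl h)) (fun h => hz (.inr h))).tendsto
        e₀).comp (he_lim z)).sub_const (lfsmKernel t e₀ z)
    have := ((continuous_pab ha.le hb.le).tendsto 0).comp hdiff
    rwa [pab_zero ha.ne' hb.ne'] at this
  have hmeas (i : ι) :
      AEStronglyMeasurable (fun z => pab a b (lfsmKernel t (e i z) z - lfsmKernel t e₀ z)) :=
    ((continuous_pab ha.le hb.le).measurable.comp
      ((measurable_lfsmKernel (t := t) (he_meas i)).sub
        (measurable_lfsmKernel measurable_const))).aestronglyMeasurable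
  have hdom := tendsto_integral_filter_of_dominated_convergence (f := fun _ => (0 : ℝ))
    (fun z => 2 ^ b * (G z + G z)) (Eventually.of_forall hmeas)
    (Eventually.of_forall fun i => ae_of_all _ (hbound i)) ((hG.add hG).const_mul _) hlim
  rwa [integral_zero] at hdom

lemma lfsm_exponent_bounds {a b h₀ : ℝ} (ha : 0 < a) (hab : a ≤ b) (hl : 1 / a - 1 / b < h₀)
    (hr : h₀ < 1 + 1 / b - 1 / a) :
    -1 < (h₀ - 1 / a) * a ∧ -1 < (h₀ - 1 / a) * b ∧ (h₀ - 1 / b - 1) * a < -1 := by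
  have hb : 0 < b := ha.trans_le hab
  refine ⟨?_, ?_, ?_⟩
  · rw [sub_mul, one_div_mul_cancel ha.ne']
    nlinarith [one_div_le_one_div_of_le ha hab]
  · have := mul_lt_mul_of_pos_right hl hb
    rw [sub_mul, one_div_mul_cancel hb.ne'] at this
    nlinarith
  · have := mul_lt_mul_of_pos_right (show h₀ - 1 / b - 1 < -(1 / a) by linarith) ha
    rwa [neg_mul, one_div_mul_cancel ha.ne'] at this

theorem linear_fractional_multistable_localisable_general (a b : ℝ)
    (ha : 0 < a) (hab : a ≤ b)
    (α : ℝ → ℝ) (hαc : Continuous α) (hα : ∀ x, α x ∈ Set.Icc a b)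
    (h₀ : ℝ) (hh₀l : 1 / a - 1 / b < h₀) (hh₀r : h₀ < 1 + 1 / b - 1 / a) :
    ∀ u t : ℝ,
      Tendsto (fun r : ℝ => ∫ z : ℝ,
          pab a b (posPow (t - z) (h₀ - 1 / α (u + r * z)) -
            posPow (-z) (h₀ - 1 / α (u + r * z)) -
            posPow (t - z) (h₀ - 1 / α u) + posPow (-z) (h₀ - 1 / α u)))
        (𝓝[>] (0:ℝ)) (𝓝 0) := by
  intro u t
  have hexp (x : ℝ) : h₀ - 1 / α x ∈ Icc (h₀ - 1 / a) (h₀ - 1 / b) := by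
    have := one_div_le_one_div_of_le ha (hα x).1
    have := one_div_le_one_div_of_le (ha.trans_le (hα x).1) (hα x).2
    constructor <;> linarith
  have hexp_cont : Continuous fun x => h₀ - 1 / α x :=
    continuous_const.sub (continuous_const.div hαc fun x => (ha.trans_le (hα x).1).ne')
  obtain ⟨hma, hmb, hM⟩ := lfsm_exponent_bounds ha hab hh₀l hh₀r
  have hlim (z : ℝ) : Tendsto (fun r => h₀ - 1 / α (u + r * z)) (𝓝[>] 0) (𝓝 (h₀ - 1 / α u)) :=
    ((hexp_cont.comp (by fun_prop : Continuous fun r : ℝ => u + r * z)).tendsto' 0 _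
      (by simp)).mono_left nhdsWithin_le_nhds
  simpa only [lfsmKernel_sub_lfsmKernel] using tendsto_integral_pab_lfsmKernel_sub (t := t)
    (e := fun r z => h₀ - 1 / α (u + r * z))
    ha hab hma hmb hM
    (fun r => (hexp_cont.comp (by fun_prop : Continuous fun z : ℝ => u + r * z)).measurable)
    (fun r z => hexp (u + r * z)) (hexp u) hlim

/-- localisability of linear fractional multistable motion: for every
`u` and `t`,
`∫ |(t−z)_+^{h₀−1/α(u+rz)} − (−z)_+^{h₀−1/α(u+rz)} − (t−z)_+^{h₀−1/α(u)}
   + (−z)_+^{h₀−1/α(u)}|^{a,b} dz → 0` as `r → 0⁺`;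
this is the localisability condition of the main theorem at `u` with index `h₀` and
limit kernel `k(t,z) = (t−z)_+^{h₀−1/α(u)} − (−z)_+^{h₀−1/α(u)}`, so linear fractional
multistable motion is `h₀`-localisable at `u` with local form `L_{α(u),h₀,1,0}`. -/
theorem linear_fractional_multistable_localisable (a b : ℝ)
    (ha : 0 < a) (hab : a ≤ b) (hb : b < 2)
    (α : ℝ → ℝ) (hαc : Continuous α) (hα : ∀ x, α x ∈ Set.Icc a b)
    (h₀ : ℝ) (hh₀l : 1 / a - 1 / b < h₀) (hh₀r : h₀ < 1 + 1 / b - 1 / a)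
    (hh₀ : ∀ x, h₀ ≠ 1 / α x) :
    ∀ u t : ℝ,
      Tendsto (fun r : ℝ => ∫ z : ℝ,
          pab a b (posPow (t - z) (h₀ - 1 / α (u + r * z)) -
            posPow (-z) (h₀ - 1 / α (u + r * z)) -
            posPow (t - z) (h₀ - 1 / α u) + posPow (-z) (h₀ - 1 / α u)))
        (𝓝[>] (0:ℝ)) (𝓝 0) :=
  linear_fractional_multistable_localisable_general a b ha hab α hαc hα h₀ hh₀l hh₀r
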